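/- Let v_1, …, v_n be valuations on [m] and let (A_1, …, A_n) be an allocation of [m] in which every bundle A_i is nonempty. Then there exists an injective map π : {1,…,n} → [m] with π(i) ∈ A_i for every i, such that v_i({π(i)}) + ℓ(v_i) ≥ v_i(A_i)/(4n) for every agent i, where ℓ(v_i) := min_{S ⊆ [m], |S| ≤ 2n} (1/(2n))·v_i([m] \ S). -/
import Mathlib


/-- `ℓ(v) := min_{S ⊆ [m], |S| ≤ 2n} (1/(2n))·v([m] \ S)`. -/
noncomputable def ell (m n : ℕ) (v : Finset (Fin m) → ℝ) : ℝ :=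
  ((Finset.univ : Finset (Fin m)).powerset.filter (fun S => S.card ≤ 2 * n)).inf'
    ⟨∅, by simp⟩ (fun S => (1 / (2 * (n : ℝ))) * v (Finset.univ \ S))

lemma sub_sum {m : ℕ} (v : Finset (Fin m) → ℝ) (hnorm : v ∅ = 0)
    (hsub : ∀ A B : Finset (Fin m), v (A ∪ B) ≤ v A + v B) (T : Finset (Fin m)) :
    v T ≤ ∑ g ∈ T, v {g} := by
  induction T using Finset.induction_on with
  | empty => simp [hnorm]
  | @insert a s hx ih =>
    rw [Finset.insert_eq]
    calc v ({a} ∪ s) ≤ v {a} + v s := hsub _ _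
      _ ≤ v {a} + ∑ g ∈ s, v {g} := by linarith
      _ = ∑ g ∈ {a} ∪ s, v {g} := by rw [← Finset.insert_eq, Finset.sum_insert hx]

/-- Given an allocation `(A_1, …, A_n)` of `[m]` with nonempty bundles, there is an
injective choice `π` of one good from each bundle such that
`v_i({π(i)}) + ℓ(v_i) ≥ v_i(A_i)/(4n)` for every agent `i`. -/
theorem stmt_6 (m n : ℕ) (hn : 1 ≤ n)
    (v : Fin n → Finset (Fin m) → ℝ)
    (hnonneg : ∀ i (S : Finset (Fin m)), 0 ≤ v i S)
    (hnorm : ∀ i, v i ∅ = 0)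
    (hmono : ∀ i (A B : Finset (Fin m)), A ⊆ B → v i A ≤ v i B)
    (hsub : ∀ i (A B : Finset (Fin m)), v i (A ∪ B) ≤ v i A + v i B)
    (A : Fin n → Finset (Fin m))
    (hdisj : ∀ i j, i ≠ j → Disjoint (A i) (A j))
    (hcover : Finset.univ.biUnion A = Finset.univ)
    (hne : ∀ i, (A i).Nonempty) :
    ∃ π : Fin n → Fin m, Function.Injective π ∧ (∀ i, π i ∈ A i) ∧
      (∀ i, v i {π i} + ell m n (v i) ≥ v i (A i) / (4 * (n : ℝ))) := by
  have hmax : ∀ i, ∃ b ∈ A i, ∀ a ∈ A i, v i {a} ≤ v i {b} := fun i =>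
    (A i).exists_max_image (fun g => v i {g}) (hne i)
  choose π hπmem hπmax using hmax
  have npos : (0:ℝ) < n := by exact_mod_cast hn
  refine ⟨π, ?_, hπmem, ?_⟩
  · intro i j hij
    by_contra hne'
    exact (Finset.disjoint_left.mp (hdisj i j hne')) (hπmem i) (hij ▸ hπmem j)
  · intro i
    -- find the set attaining the infimum
    obtain ⟨S, hS, hSeq⟩ := Finset.exists_mem_eq_inf'
      (s := ((Finset.univ : Finset (Fin m)).powerset.filter (fun S => S.card ≤ 2 * n)))
      ⟨∅, by simp⟩ (fun S => (1 / (2 * (n : ℝ))) * v i (Finset.univ \ S))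
    have hScard : S.card ≤ 2 * n := (Finset.mem_filter.mp hS).2
    have hell : ell m n (v i) = (1 / (2 * (n : ℝ))) * v i (Finset.univ \ S) := hSeq
    -- v i (A i) ≤ v i (univ \ S) + 2n * v i {π i}
    have h1 : v i (A i) ≤ v i (A i \ S) + v i (A i ∩ S) := by
      calc v i (A i) = v i ((A i \ S) ∪ (A i ∩ S)) := by rw [Finset.sdiff_union_inter]
        _ ≤ _ := hsub i _ _
    have h2 : v i (A i \ S) ≤ v i (Finset.univ \ S) :=
      hmono i _ _ (Finset.sdiff_subset_sdiff (Finset.subset_univ _) le_rfl)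
    have h3 : v i (A i ∩ S) ≤ (2 * n : ℝ) * v i {π i} := by
      have hs := sub_sum (v i) (hnorm i) (hsub i) (A i ∩ S)
      have hb : ∑ g ∈ A i ∩ S, v i {g} ≤ ∑ _g ∈ A i ∩ S, v i {π i} :=
        Finset.sum_le_sum fun g hg => hπmax i g (Finset.mem_of_mem_inter_left hg)
      have hc : ((A i ∩ S).card : ℝ) ≤ 2 * n := by
        have := (Finset.card_le_card (Finset.inter_subset_right (s₁ := A i) (s₂ := S))).trans hScard
        exact_mod_cast this
      have hv : 0 ≤ v i {π i} := hnonneg i _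
      calc v i (A i ∩ S) ≤ ∑ _g ∈ A i ∩ S, v i {π i} := hs.trans hb
        _ = ((A i ∩ S).card : ℝ) * v i {π i} := by
            rw [Finset.sum_const, nsmul_eq_mul]
        _ ≤ (2 * n : ℝ) * v i {π i} := by nlinarith
    have hvS : 0 ≤ v i (Finset.univ \ S) := hnonneg i _
    have hv : 0 ≤ v i {π i} := hnonneg i _
    rw [hell, ge_iff_le, div_le_iff₀ (by positivity), add_mul]
    have hinv : 1 / (2 * (n:ℝ)) * v i (Finset.univ \ S) * (4 * n)
        = 2 * v i (Finset.univ \ S) := by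
      field_simp
      ring
    rw [hinv]
    nlinarith [mul_nonneg (le_of_lt npos) hv]
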